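/- arXiv:math/0611075 — 2 statements merged into one kernel-verified Lean document; each statement's English description precedes it below -/
import Mathlib

section
/- Fix real parameters a3, a6, a7, b1, b2, w1, w2 with a3 > 0, a6 > 0, a7 > 0. If x = (c3, s3, c6, s6, c7, s7) ∈ ℝ^6 is a singular configuration of the subsystem 367 (i.e. H(x) = 0 and the 5×6 Jacobian of H at x has rank < 5), then c6 = 0, s6^2 = 1, and either (c3 = c7 and s3 = s7) or (c3 = -c7 and s3 = -s7). -/
/-!
At a singular configuration the Jacobian has a nonzero left null vector
`(λ₁, λ₂, μ₃, μ₆, μ₇)`: a Lagrange multiplier relation. Crossing each pair of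
columns `(cᵢ, sᵢ)` with its unit vector eliminates `μᵢ` and shows that the force
`λ = (λ₁, λ₂)`, which cannot vanish, is orthogonal to both `(c3, s3)` and `(c7, s7)`
(the `a6` terms of links 6 and 7 cancel), and that `c6 · (λ × (c7, s7)) = 0`.
Two unit vectors orthogonal to the same nonzero plane vector agree up to sign, and
`λ × (c7, s7) ≠ 0` because `λ ⟂ (c7, s7)`; hence `c6 = 0`.
-/

/-- The Jacobian matrix of a map `f : ℝ^n → ℝ^m` at a point `x`,
whose `(i, j)` entry is the partial derivative of the `i`-th component of `f`
with respect to the `j`-th variable. -/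
noncomputable def jacobian {n m : ℕ} (f : (Fin n → ℝ) → Fin m → ℝ) (x : Fin n → ℝ) :
    Matrix (Fin m) (Fin n) ℝ :=
  Matrix.of fun i j => fderiv ℝ (fun y => f y i) x (Pi.single j 1)

/-- The constraint map `H : ℝ^6 → ℝ^5` of the subsystem 367, in the variables
`(c3, s3, c6, s6, c7, s7)`. -/
noncomputable def H367 (a3 a6 a7 b1 b2 w1 w2 : ℝ) (x : Fin 6 → ℝ) : Fin 5 → ℝ :=
  ![a6 * (x 2 * x 4 - x 3 * x 5) + a7 * x 5 - a3 * x 1 + w1 - b1,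
    a6 * (x 3 * x 4 + x 2 * x 5) - a7 * x 4 + a3 * x 0 + w2 - b2,
    x 0 ^ 2 + x 1 ^ 2 - 1,
    x 2 ^ 2 + x 3 ^ 2 - 1,
    x 4 ^ 2 + x 5 ^ 2 - 1]

open Matrix

theorem Matrix.exists_ne_zero_vecMul_eq_zero_of_rank_lt {K m n : Type*} [Field K] [Fintype m]
    [Fintype n] {A : Matrix m n K} (h : A.rank < Fintype.card m) : ∃ v ≠ 0, v ᵥ* A = 0 := by
  have hrows : ¬LinearIndependent K A.row := fun hA => h.ne hA.rank_matrix
  obtain ⟨v, hv, i, hi⟩ := Fintype.not_linearIndependent_iff.1 hrows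
  exact ⟨v, fun h0 => hi (congrFun h0 i), by rwa [vecMul_eq_sum]⟩

theorem jacobian_apply_eq_deriv_update {n m : ℕ} {f : (Fin n → ℝ) → Fin m → ℝ}
    {x : Fin n → ℝ} {i : Fin m} (j : Fin n) (hf : DifferentiableAt ℝ (fun y => f y i) x) :
    jacobian f x i j = deriv (fun t => f (Function.update x j t) i) (x j) := by
  rw [← Function.update_eq_self j x] at hf
  have h := hf.hasFDerivAt.comp_hasDerivAt (x j) (hasDerivAt_update x j (x j))
  simpa only [Function.update_eq_self, jacobian, Matrix.of_apply, Function.comp_def]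
    using h.deriv.symm

section Plane

variable {c s c' s' p q : ℝ}

theorem cross_eq_zero_of_orthogonal (hpq : p ≠ 0 ∨ q ≠ 0) (h : c * p + s * q = 0)
    (h' : c' * p + s' * q = 0) : c * s' - s * c' = 0 := by
  rcases hpq with hp | hq
  · exact (mul_eq_zero.1 (by linear_combination s' * h - s * h' :
      (c * s' - s * c') * p = 0)).resolve_right hp
  · exact (mul_eq_zero.1 (by linear_combination c * h' - c' * h :
      (c * s' - s * c') * q = 0)).resolve_right hq

theorem eq_or_eq_neg_of_orthogonal (hu : c ^ 2 + s ^ 2 = 1) (hu' : c' ^ 2 + s' ^ 2 = 1)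
    (hpq : p ≠ 0 ∨ q ≠ 0) (h : c * p + s * q = 0) (h' : c' * p + s' * q = 0) :
    (c = c' ∧ s = s') ∨ (c = -c' ∧ s = -s') := by
  have hcross := cross_eq_zero_of_orthogonal hpq h h'
  -- Lagrange's identity: `(u ⬝ u')² + (u × u')² = ‖u‖² ‖u'‖² = 1`.
  have hdot : (c * c' + s * s' - 1) * (c * c' + s * s' + 1) = 0 := by
    linear_combination c' ^ 2 * hu + s' ^ 2 * hu + hu' - (c * s' - s * c') * hcross
  rcases mul_eq_zero.1 hdot with hdot | hdot
  · have := mul_self_add_mul_self_eq_zero.1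
      (by linear_combination hu + hu' - 2 * hdot : (c - c') * (c - c') + (s - s') * (s - s') = 0)
    exact Or.inl ⟨sub_eq_zero.1 this.1, sub_eq_zero.1 this.2⟩
  · have := mul_self_add_mul_self_eq_zero.1
      (by linear_combination hu + hu' + 2 * hdot : (c + c') * (c + c') + (s + s') * (s + s') = 0)
    exact Or.inr ⟨eq_neg_of_add_eq_zero_left this.1, eq_neg_of_add_eq_zero_left this.2⟩

theorem perp_ne_zero_of_orthogonal (hu : c ^ 2 + s ^ 2 = 1) (hpq : p ≠ 0 ∨ q ≠ 0)
    (h : c * p + s * q = 0) : s * p - c * q ≠ 0 := by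
  intro hperp
  have := mul_self_add_mul_self_eq_zero.1 (by
    linear_combination (c * p + s * q) * h + (s * p - c * q) * hperp - (p ^ 2 + q ^ 2) * hu :
    p * p + q * q = 0)
  exact hpq.elim (· this.1) (· this.2)

theorem eq_zero_of_mul_eq_zero_of_sq_add_sq_eq_one {μ : ℝ} (hu : c ^ 2 + s ^ 2 = 1)
    (hc : μ * c = 0) (hs : μ * s = 0) : μ = 0 := by
  linear_combination c * hc + s * hs - μ * hu

end Plane

section Subsystem367

variable {a3 a6 a7 b1 b2 w1 w2 c3 s3 c6 s6 c7 s7 : ℝ}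

theorem sq_add_sq_eq_one_of_H367_eq_zero
    (hH : H367 a3 a6 a7 b1 b2 w1 w2 ![c3, s3, c6, s6, c7, s7] = 0) :
    c3 ^ 2 + s3 ^ 2 = 1 ∧ c6 ^ 2 + s6 ^ 2 = 1 ∧ c7 ^ 2 + s7 ^ 2 = 1 := by
  have h3 := congrFun hH 2
  have h6 := congrFun hH 3
  have h7 := congrFun hH 4
  simp only [H367, Fin.isValue, cons_val, cons_val_one, cons_val_zero, Pi.zero_apply] at h3 h6 h7
  exact ⟨by linarith, by linarith, by linarith⟩

theorem differentiable_H367_apply (i : Fin 5) :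
    Differentiable ℝ (fun x => H367 a3 a6 a7 b1 b2 w1 w2 x i) := by
  fin_cases i <;>
    simp only [H367, Fin.isValue, Fin.zero_eta, Fin.mk_one, Fin.reduceFinMk, cons_val_zero,
      cons_val_one, cons_val] <;>
    fun_prop

theorem jacobian_H367 :
    jacobian (H367 a3 a6 a7 b1 b2 w1 w2) ![c3, s3, c6, s6, c7, s7] =
      !![0, -a3, a6 * c7, -(a6 * s7), a6 * c6, a7 - a6 * s6;
        a3, 0, a6 * s7, a6 * c7, a6 * s6 - a7, a6 * c6;
        2 * c3, 2 * s3, 0, 0, 0, 0;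
        0, 0, 2 * c6, 2 * s6, 0, 0;
        0, 0, 0, 0, 2 * c7, 2 * s7] := by
  ext i j
  rw [jacobian_apply_eq_deriv_update j (differentiable_H367_apply i _)]
  fin_cases i <;> fin_cases j <;> simp [H367] <;> simp (disch := fun_prop) [sub_eq_neg_add]

theorem vecMul_jacobian_H367_eq_zero_iff {v : Fin 5 → ℝ} :
    v ᵥ* jacobian (H367 a3 a6 a7 b1 b2 w1 w2) ![c3, s3, c6, s6, c7, s7] = 0 ↔
      a3 * v 1 + 2 * c3 * v 2 = 0 ∧ -(a3 * v 0) + 2 * s3 * v 2 = 0 ∧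
      a6 * (c7 * v 0 + s7 * v 1) + 2 * c6 * v 3 = 0 ∧
      a6 * (c7 * v 1 - s7 * v 0) + 2 * s6 * v 3 = 0 ∧
      a6 * c6 * v 0 + (a6 * s6 - a7) * v 1 + 2 * c7 * v 4 = 0 ∧
      (a7 - a6 * s6) * v 0 + a6 * c6 * v 1 + 2 * s7 * v 4 = 0 := by
  rw [jacobian_H367, funext_iff]
  simp only [vecMul, dotProduct, of_apply, cons_val', cons_val_fin_one, Fin.sum_univ_five,
    Fin.isValue, cons_val_zero, cons_val_one, cons_val, Pi.zero_apply, Fin.forall_fin_succ,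
    mul_zero, zero_add, add_zero, cons_val_succ, mul_neg, forall_const]
  ring_nf

theorem ne_zero_or_ne_zero_of_vecMul_jacobian_H367_eq_zero (hu3 : c3 ^ 2 + s3 ^ 2 = 1)
    (hu6 : c6 ^ 2 + s6 ^ 2 = 1) (hu7 : c7 ^ 2 + s7 ^ 2 = 1) {v : Fin 5 → ℝ} (hv : v ≠ 0)
    (hJ : v ᵥ* jacobian (H367 a3 a6 a7 b1 b2 w1 w2) ![c3, s3, c6, s6, c7, s7] = 0) :
    v 0 ≠ 0 ∨ v 1 ≠ 0 := by
  by_contra! h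
  obtain ⟨e0, e1, e2, e3, e4, e5⟩ := vecMul_jacobian_H367_eq_zero_iff.1 hJ
  simp only [h.1, h.2, mul_zero, zero_add, neg_zero, add_zero] at e0 e1 e2 e3 e4 e5
  have h2 : v 2 = 0 := eq_zero_of_mul_eq_zero_of_sq_add_sq_eq_one hu3 (by linarith) (by linarith)
  have h3 : v 3 = 0 := eq_zero_of_mul_eq_zero_of_sq_add_sq_eq_one hu6 (by linarith) (by linarith)
  have h4 : v 4 = 0 := eq_zero_of_mul_eq_zero_of_sq_add_sq_eq_one hu7 (by linarith) (by linarith)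
  exact hv (by ext i; fin_cases i <;> simp [h.1, h.2, h2, h3, h4])

theorem tangency_of_vecMul_jacobian_H367_eq_zero (ha3 : a3 ≠ 0) (ha6 : a6 ≠ 0) (ha7 : a7 ≠ 0)
    {v : Fin 5 → ℝ}
    (hJ : v ᵥ* jacobian (H367 a3 a6 a7 b1 b2 w1 w2) ![c3, s3, c6, s6, c7, s7] = 0) :
    c3 * v 0 + s3 * v 1 = 0 ∧ c7 * v 0 + s7 * v 1 = 0 ∧ c6 * (s7 * v 0 - c7 * v 1) = 0 := by
  obtain ⟨e0, e1, e2, e3, e4, e5⟩ := vecMul_jacobian_H367_eq_zero_iff.1 hJ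
  have t3 : a3 * (c3 * v 0 + s3 * v 1) = 0 := by linear_combination s3 * e0 - c3 * e1
  have t67 : a6 * (s6 * (c7 * v 0 + s7 * v 1) + c6 * (s7 * v 0 - c7 * v 1)) = 0 := by
    linear_combination s6 * e2 - c6 * e3
  have t7 : a7 * (c7 * v 0 + s7 * v 1) = 0 := by
    linear_combination c7 * e5 - s7 * e4 + t67
  have h7 := (mul_eq_zero.1 t7).resolve_left ha7
  refine ⟨(mul_eq_zero.1 t3).resolve_left ha3, h7, ?_⟩
  linear_combination (mul_eq_zero.1 t67).resolve_left ha6 - s6 * h7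

end Subsystem367

/-- For positive rod lengths, every singular configuration of the subsystem 367
satisfies `c6 = 0`, `s6^2 = 1`, and `(c3, s3) = ±(c7, s7)`. -/
theorem singular367_structure (a3 a6 a7 b1 b2 w1 w2 : ℝ)
    (h3 : a3 > 0) (h6 : a6 > 0) (h7 : a7 > 0)
    (c3 s3 c6 s6 c7 s7 : ℝ)
    (hH : H367 a3 a6 a7 b1 b2 w1 w2 ![c3, s3, c6, s6, c7, s7] = 0)
    (hrank : (jacobian (H367 a3 a6 a7 b1 b2 w1 w2) ![c3, s3, c6, s6, c7, s7]).rank < 5) :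
    c6 = 0 ∧ s6 ^ 2 = 1 ∧ ((c3 = c7 ∧ s3 = s7) ∨ (c3 = -c7 ∧ s3 = -s7)) := by
  obtain ⟨hu3, hu6, hu7⟩ := sq_add_sq_eq_one_of_H367_eq_zero hH
  obtain ⟨v, hv, hJ⟩ :=
    Matrix.exists_ne_zero_vecMul_eq_zero_of_rank_lt (by rwa [Fintype.card_fin])
  have hforce := ne_zero_or_ne_zero_of_vecMul_jacobian_H367_eq_zero hu3 hu6 hu7 hv hJ
  obtain ⟨t3, t7, t6⟩ := tangency_of_vecMul_jacobian_H367_eq_zero h3.ne' h6.ne' h7.ne' hJ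
  have hc6 : c6 = 0 :=
    (mul_eq_zero.1 t6).resolve_right (perp_ne_zero_of_orthogonal hu7 hforce t7)
  refine ⟨hc6, by linear_combination hu6 - c6 * hc6, ?_⟩
  exact eq_or_eq_neg_of_orthogonal hu3 hu7 hforce t3 t7
end

section
/- Fix real parameters a1, ..., a7, b1, b2, w1, w2 with a_i > 0 for all i, a6 ≠ a7, a1 ≠ a2, (b1, b2) ≠ (w1, w2), and (a3-a6+a7)^2 = (b1-w1)^2 + (b2-w2)^2. Define c7 = (b2-w2)/(a6-a3-a7), s7 = (b1-w1)/(a3-a6+a7), n4 = b1^2 + b2^2 + a3^2 + 2*a3*(b2*c7 - b1*s7), n3 = n4 - (a1-a2)^2, and t5 = a4-a5+a6-a7, t6 = a4-a5-a6+a7, t7 = a4+a5-a6+a7, t8 = a4+a5+a6-a7. If t5*t6*t7*t8 < 0 and n3*(4*a1*a2 - n3) > 0, then there exist at least 4 distinct points x ∈ ℝ^14 that are singular points of the full constraint system, i.e. p(x) = 0 and the 13×14 Jacobian matrix of p at x has rank strictly less than 13. -/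
/-- The full constraint map `p : ℝ^14 → ℝ^13` of the Andrews squeezing mechanism,
in the variables `(c1, s1, c2, s2, c3, s3, c4, s4, c5, s5, c6, s6, c7, s7)`. -/
noncomputable def andrewsP (a1 a2 a3 a4 a5 a6 a7 b1 b2 w1 w2 : ℝ)
    (x : Fin 14 → ℝ) : Fin 13 → ℝ :=
  ![a1 * x 0 - a2 * (x 0 * x 2 - x 1 * x 3) - a3 * x 5 - b1,
    a1 * x 1 - a2 * (x 1 * x 2 + x 0 * x 3) + a3 * x 4 - b2,
    a1 * x 0 - a2 * (x 0 * x 2 - x 1 * x 3) - a4 * (x 7 * x 8 + x 6 * x 9) - a5 * x 8 - w1,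
    a1 * x 1 - a2 * (x 1 * x 2 + x 0 * x 3) + a4 * (x 6 * x 8 - x 7 * x 9) - a5 * x 9 - w2,
    a1 * x 0 - a2 * (x 0 * x 2 - x 1 * x 3) - a6 * (x 10 * x 12 - x 11 * x 13) - a7 * x 13 - w1,
    a1 * x 1 - a2 * (x 1 * x 2 + x 0 * x 3) - a6 * (x 11 * x 12 + x 10 * x 13) + a7 * x 12 - w2,
    x 0 ^ 2 + x 1 ^ 2 - 1,
    x 2 ^ 2 + x 3 ^ 2 - 1,
    x 4 ^ 2 + x 5 ^ 2 - 1,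
    x 6 ^ 2 + x 7 ^ 2 - 1,
    x 8 ^ 2 + x 9 ^ 2 - 1,
    x 10 ^ 2 + x 11 ^ 2 - 1,
    x 12 ^ 2 + x 13 ^ 2 - 1]

/-- A point `x ∈ ℝ^14` is a singular point of the Andrews constraint system if
`p(x) = 0` and the `13 × 14` Jacobian matrix of `p` at `x` has rank `< 13`. -/
def IsSingularAndrews (a1 a2 a3 a4 a5 a6 a7 b1 b2 w1 w2 : ℝ) (x : Fin 14 → ℝ) : Prop :=
  andrewsP a1 a2 a3 a4 a5 a6 a7 b1 b2 w1 w2 x = 0 ∧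
  (jacobian (andrewsP a1 a2 a3 a4 a5 a6 a7 b1 b2 w1 w2) x).rank < 13

noncomputable def APt (a1 a2 a3 a4 a5 a6 a7 b1 b2 n4 c7 s7 c2 s2 c4 s4 : ℝ) : Fin 14 → ℝ :=
  ![((b1 - a3*s7) * (a1 - a2*c2) - (b2 + a3*c7) * (a2*s2)) / n4,
    ((b1 - a3*s7) * (a2*s2) + (b2 + a3*c7) * (a1 - a2*c2)) / n4,
    c2, s2, -c7, -s7, c4, s4,
    ((a6-a7)*s7 * (-(a4*s4) - a5) - (a7-a6)*c7 * (-(a4*c4))) / (a6-a7)^2,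
    ((a6-a7)*s7 * (-(a4*c4)) + (a7-a6)*c7 * (-(a4*s4) - a5)) / (a6-a7)^2,
    0, 1, c7, s7]

/-- transposed Jacobian matrix of andrewsP, rows = variables -/
def jmatT (a1 a2 a3 a4 a5 a6 a7 : ℝ) (x : Fin 14 → ℝ) : Matrix (Fin 14) (Fin 13) ℝ :=
  ![![a1 - a2 * x 2, -(a2 * x 3), a1 - a2 * x 2, -(a2 * x 3), a1 - a2 * x 2, -(a2 * x 3), 2 * x 0, 0, 0, 0, 0, 0, 0],
    ![a2 * x 3, a1 - a2 * x 2, a2 * x 3, a1 - a2 * x 2, a2 * x 3, a1 - a2 * x 2, 2 * x 1, 0, 0, 0, 0, 0, 0],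
    ![-(a2 * x 0), -(a2 * x 1), -(a2 * x 0), -(a2 * x 1), -(a2 * x 0), -(a2 * x 1), 0, 2 * x 2, 0, 0, 0, 0, 0],
    ![a2 * x 1, -(a2 * x 0), a2 * x 1, -(a2 * x 0), a2 * x 1, -(a2 * x 0), 0, 2 * x 3, 0, 0, 0, 0, 0],
    ![0, a3, 0, 0, 0, 0, 0, 0, 2 * x 4, 0, 0, 0, 0],
    ![-a3, 0, 0, 0, 0, 0, 0, 0, 2 * x 5, 0, 0, 0, 0],
    ![0, 0, -(a4 * x 9), a4 * x 8, 0, 0, 0, 0, 0, 2 * x 6, 0, 0, 0],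
    ![0, 0, -(a4 * x 8), -(a4 * x 9), 0, 0, 0, 0, 0, 2 * x 7, 0, 0, 0],
    ![0, 0, -(a4 * x 7) - a5, a4 * x 6, 0, 0, 0, 0, 0, 0, 2 * x 8, 0, 0],
    ![0, 0, -(a4 * x 6), -(a4 * x 7) - a5, 0, 0, 0, 0, 0, 0, 2 * x 9, 0, 0],
    ![0, 0, 0, 0, -(a6 * x 12), -(a6 * x 13), 0, 0, 0, 0, 0, 2 * x 10, 0],
    ![0, 0, 0, 0, a6 * x 13, -(a6 * x 12), 0, 0, 0, 0, 0, 2 * x 11, 0],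
    ![0, 0, 0, 0, -(a6 * x 10), -(a6 * x 11) + a7, 0, 0, 0, 0, 0, 0, 2 * x 12],
    ![0, 0, 0, 0, a6 * x 11 - a7, -(a6 * x 10), 0, 0, 0, 0, 0, 0, 2 * x 13]]

noncomputable abbrev pr (k : Fin 14) : (Fin 14 → ℝ) →L[ℝ] ℝ := ContinuousLinearMap.proj k


theorem hasFDerivAt_sq (k : Fin 14) (x : Fin 14 → ℝ) :
    HasFDerivAt (fun y : Fin 14 → ℝ => y k ^ 2) ((2 * x k) • pr k) x := by
  have hpk : HasFDerivAt (fun y : Fin 14 → ℝ => y k) (pr k) x := hasFDerivAt_apply k x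
  have h : HasFDerivAt (fun y : Fin 14 → ℝ => y k * y k) (x k • pr k + x k • pr k) x := hpk.mul hpk
  have he : (fun y : Fin 14 → ℝ => y k ^ 2) = fun y => y k * y k := by
    funext y; ring
  rw [he]
  convert h using 1
  ext v
  simp [ContinuousLinearMap.add_apply, ContinuousLinearMap.smul_apply]
  ring

set_option maxHeartbeats 4000000 in
theorem jac_eq (a1 a2 a3 a4 a5 a6 a7 b1 b2 w1 w2 : ℝ) (x : Fin 14 → ℝ) :
    jacobian (andrewsP a1 a2 a3 a4 a5 a6 a7 b1 b2 w1 w2) x = (jmatT a1 a2 a3 a4 a5 a6 a7 x).transpose := by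
  have hp : ∀ k : Fin 14, HasFDerivAt (fun y : Fin 14 → ℝ => y k) (pr k) x :=
    fun k => hasFDerivAt_apply k x
  ext i j
  fin_cases i
  · show fderiv ℝ (fun y : Fin 14 → ℝ => a1 * y 0 - a2 * (y 0 * y 2 - y 1 * y 3) - a3 * y 5 - b1) x (Pi.single j 1) = _
    have h : HasFDerivAt (fun y : Fin 14 → ℝ => a1 * y 0 - a2 * (y 0 * y 2 - y 1 * y 3) - a3 * y 5 - b1)
        (((a1 • pr 0) - (a2 • ((x 0 • pr 2 + x 2 • pr 0) - (x 1 • pr 3 + x 3 • pr 1)))) - a3 • pr 5) x :=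
      ((((hp 0).const_mul a1).sub ((((hp 0).mul (hp 2)).sub ((hp 1).mul (hp 3))).const_mul a2)).sub
        ((hp 5).const_mul a3)).sub_const b1
    rw [h.fderiv]
    fin_cases j <;>
      · simp (config := { decide := true }) [ContinuousLinearMap.sub_apply, ContinuousLinearMap.add_apply,
          ContinuousLinearMap.smul_apply, ContinuousLinearMap.proj_apply, Pi.single_apply]
        try rfl
  · show fderiv ℝ (fun y : Fin 14 → ℝ => a1 * y 1 - a2 * (y 1 * y 2 + y 0 * y 3) + a3 * y 4 - b2) x (Pi.single j 1) = _
    have h : HasFDerivAt (fun y : Fin 14 → ℝ => a1 * y 1 - a2 * (y 1 * y 2 + y 0 * y 3) + a3 * y 4 - b2)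
        ((((a1 • pr 1) - (a2 • ((x 1 • pr 2 + x 2 • pr 1) + (x 0 • pr 3 + x 3 • pr 0)))) + a3 • pr 4)) x :=
      (((((hp 1).const_mul a1).sub ((((hp 1).mul (hp 2)).add ((hp 0).mul (hp 3))).const_mul a2)).add
        ((hp 4).const_mul a3))).sub_const b2
    rw [h.fderiv]
    fin_cases j <;>
      · simp (config := { decide := true }) [ContinuousLinearMap.sub_apply, ContinuousLinearMap.add_apply,
          ContinuousLinearMap.smul_apply, ContinuousLinearMap.proj_apply, Pi.single_apply]
        try rfl
  · show fderiv ℝ (fun y : Fin 14 → ℝ => a1 * y 0 - a2 * (y 0 * y 2 - y 1 * y 3) - a4 * (y 7 * y 8 + y 6 * y 9) - a5 * y 8 - w1) x (Pi.single j 1) = _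
    have h : HasFDerivAt (fun y : Fin 14 → ℝ => a1 * y 0 - a2 * (y 0 * y 2 - y 1 * y 3) - a4 * (y 7 * y 8 + y 6 * y 9) - a5 * y 8 - w1)
        ((((a1 • pr 0) - (a2 • ((x 0 • pr 2 + x 2 • pr 0) - (x 1 • pr 3 + x 3 • pr 1))))
          - (a4 • ((x 7 • pr 8 + x 8 • pr 7) + (x 6 • pr 9 + x 9 • pr 6)))) - a5 • pr 8) x :=
      (((((hp 0).const_mul a1).sub ((((hp 0).mul (hp 2)).sub ((hp 1).mul (hp 3))).const_mul a2)).sub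
        ((((hp 7).mul (hp 8)).add ((hp 6).mul (hp 9))).const_mul a4)).sub
        ((hp 8).const_mul a5)).sub_const w1
    rw [h.fderiv]
    fin_cases j <;>
      · simp (config := { decide := true }) [ContinuousLinearMap.sub_apply, ContinuousLinearMap.add_apply,
          ContinuousLinearMap.smul_apply, ContinuousLinearMap.proj_apply, Pi.single_apply]
        try rfl
  · show fderiv ℝ (fun y : Fin 14 → ℝ => a1 * y 1 - a2 * (y 1 * y 2 + y 0 * y 3) + a4 * (y 6 * y 8 - y 7 * y 9) - a5 * y 9 - w2) x (Pi.single j 1) = _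
    have h : HasFDerivAt (fun y : Fin 14 → ℝ => a1 * y 1 - a2 * (y 1 * y 2 + y 0 * y 3) + a4 * (y 6 * y 8 - y 7 * y 9) - a5 * y 9 - w2)
        ((((a1 • pr 1) - (a2 • ((x 1 • pr 2 + x 2 • pr 1) + (x 0 • pr 3 + x 3 • pr 0))))
          + (a4 • ((x 6 • pr 8 + x 8 • pr 6) - (x 7 • pr 9 + x 9 • pr 7)))) - a5 • pr 9) x :=
      (((((hp 1).const_mul a1).sub ((((hp 1).mul (hp 2)).add ((hp 0).mul (hp 3))).const_mul a2)).add
        ((((hp 6).mul (hp 8)).sub ((hp 7).mul (hp 9))).const_mul a4)).sub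
        ((hp 9).const_mul a5)).sub_const w2
    rw [h.fderiv]
    fin_cases j <;>
      · simp (config := { decide := true }) [ContinuousLinearMap.sub_apply, ContinuousLinearMap.add_apply,
          ContinuousLinearMap.smul_apply, ContinuousLinearMap.proj_apply, Pi.single_apply]
        try rfl
  · show fderiv ℝ (fun y : Fin 14 → ℝ => a1 * y 0 - a2 * (y 0 * y 2 - y 1 * y 3) - a6 * (y 10 * y 12 - y 11 * y 13) - a7 * y 13 - w1) x (Pi.single j 1) = _
    have h : HasFDerivAt (fun y : Fin 14 → ℝ => a1 * y 0 - a2 * (y 0 * y 2 - y 1 * y 3) - a6 * (y 10 * y 12 - y 11 * y 13) - a7 * y 13 - w1)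
        ((((a1 • pr 0) - (a2 • ((x 0 • pr 2 + x 2 • pr 0) - (x 1 • pr 3 + x 3 • pr 1))))
          - (a6 • ((x 10 • pr 12 + x 12 • pr 10) - (x 11 • pr 13 + x 13 • pr 11)))) - a7 • pr 13) x :=
      (((((hp 0).const_mul a1).sub ((((hp 0).mul (hp 2)).sub ((hp 1).mul (hp 3))).const_mul a2)).sub
        ((((hp 10).mul (hp 12)).sub ((hp 11).mul (hp 13))).const_mul a6)).sub
        ((hp 13).const_mul a7)).sub_const w1
    rw [h.fderiv]
    fin_cases j <;>
      · simp (config := { decide := true }) [ContinuousLinearMap.sub_apply, ContinuousLinearMap.add_apply,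
          ContinuousLinearMap.smul_apply, ContinuousLinearMap.proj_apply, Pi.single_apply]
        try rfl
  · show fderiv ℝ (fun y : Fin 14 → ℝ => a1 * y 1 - a2 * (y 1 * y 2 + y 0 * y 3) - a6 * (y 11 * y 12 + y 10 * y 13) + a7 * y 12 - w2) x (Pi.single j 1) = _
    have h : HasFDerivAt (fun y : Fin 14 → ℝ => a1 * y 1 - a2 * (y 1 * y 2 + y 0 * y 3) - a6 * (y 11 * y 12 + y 10 * y 13) + a7 * y 12 - w2)
        ((((a1 • pr 1) - (a2 • ((x 1 • pr 2 + x 2 • pr 1) + (x 0 • pr 3 + x 3 • pr 0))))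
          - (a6 • ((x 11 • pr 12 + x 12 • pr 11) + (x 10 • pr 13 + x 13 • pr 10)))) + a7 • pr 12) x :=
      ((((((hp 1).const_mul a1).sub ((((hp 1).mul (hp 2)).add ((hp 0).mul (hp 3))).const_mul a2)).sub
        ((((hp 11).mul (hp 12)).add ((hp 10).mul (hp 13))).const_mul a6)).add
        ((hp 12).const_mul a7))).sub_const w2
    rw [h.fderiv]
    fin_cases j <;>
      · simp (config := { decide := true }) [ContinuousLinearMap.sub_apply, ContinuousLinearMap.add_apply,
          ContinuousLinearMap.smul_apply, ContinuousLinearMap.proj_apply, Pi.single_apply]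
        try rfl
  · show fderiv ℝ (fun y : Fin 14 → ℝ => y 0 ^ 2 + y 1 ^ 2 - 1) x (Pi.single j 1) = _
    have h : HasFDerivAt (fun y : Fin 14 → ℝ => y 0 ^ 2 + y 1 ^ 2 - 1)
        (((2 * x 0) • pr 0) + ((2 * x 1) • pr 1)) x :=
      ((hasFDerivAt_sq 0 x).add (hasFDerivAt_sq 1 x)).sub_const 1
    rw [h.fderiv]
    fin_cases j <;>
      · simp (config := { decide := true }) [ContinuousLinearMap.sub_apply, ContinuousLinearMap.add_apply,
          ContinuousLinearMap.smul_apply, ContinuousLinearMap.proj_apply, Pi.single_apply]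
        try rfl
  · show fderiv ℝ (fun y : Fin 14 → ℝ => y 2 ^ 2 + y 3 ^ 2 - 1) x (Pi.single j 1) = _
    have h : HasFDerivAt (fun y : Fin 14 → ℝ => y 2 ^ 2 + y 3 ^ 2 - 1)
        (((2 * x 2) • pr 2) + ((2 * x 3) • pr 3)) x :=
      ((hasFDerivAt_sq 2 x).add (hasFDerivAt_sq 3 x)).sub_const 1
    rw [h.fderiv]
    fin_cases j <;>
      · simp (config := { decide := true }) [ContinuousLinearMap.sub_apply, ContinuousLinearMap.add_apply,
          ContinuousLinearMap.smul_apply, ContinuousLinearMap.proj_apply, Pi.single_apply]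
        try rfl
  · show fderiv ℝ (fun y : Fin 14 → ℝ => y 4 ^ 2 + y 5 ^ 2 - 1) x (Pi.single j 1) = _
    have h : HasFDerivAt (fun y : Fin 14 → ℝ => y 4 ^ 2 + y 5 ^ 2 - 1)
        (((2 * x 4) • pr 4) + ((2 * x 5) • pr 5)) x :=
      ((hasFDerivAt_sq 4 x).add (hasFDerivAt_sq 5 x)).sub_const 1
    rw [h.fderiv]
    fin_cases j <;>
      · simp (config := { decide := true }) [ContinuousLinearMap.sub_apply, ContinuousLinearMap.add_apply,
          ContinuousLinearMap.smul_apply, ContinuousLinearMap.proj_apply, Pi.single_apply]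
        try rfl
  · show fderiv ℝ (fun y : Fin 14 → ℝ => y 6 ^ 2 + y 7 ^ 2 - 1) x (Pi.single j 1) = _
    have h : HasFDerivAt (fun y : Fin 14 → ℝ => y 6 ^ 2 + y 7 ^ 2 - 1)
        (((2 * x 6) • pr 6) + ((2 * x 7) • pr 7)) x :=
      ((hasFDerivAt_sq 6 x).add (hasFDerivAt_sq 7 x)).sub_const 1
    rw [h.fderiv]
    fin_cases j <;>
      · simp (config := { decide := true }) [ContinuousLinearMap.sub_apply, ContinuousLinearMap.add_apply,
          ContinuousLinearMap.smul_apply, ContinuousLinearMap.proj_apply, Pi.single_apply]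
        try rfl
  · show fderiv ℝ (fun y : Fin 14 → ℝ => y 8 ^ 2 + y 9 ^ 2 - 1) x (Pi.single j 1) = _
    have h : HasFDerivAt (fun y : Fin 14 → ℝ => y 8 ^ 2 + y 9 ^ 2 - 1)
        (((2 * x 8) • pr 8) + ((2 * x 9) • pr 9)) x :=
      ((hasFDerivAt_sq 8 x).add (hasFDerivAt_sq 9 x)).sub_const 1
    rw [h.fderiv]
    fin_cases j <;>
      · simp (config := { decide := true }) [ContinuousLinearMap.sub_apply, ContinuousLinearMap.add_apply,
          ContinuousLinearMap.smul_apply, ContinuousLinearMap.proj_apply, Pi.single_apply]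
        try rfl
  · show fderiv ℝ (fun y : Fin 14 → ℝ => y 10 ^ 2 + y 11 ^ 2 - 1) x (Pi.single j 1) = _
    have h : HasFDerivAt (fun y : Fin 14 → ℝ => y 10 ^ 2 + y 11 ^ 2 - 1)
        (((2 * x 10) • pr 10) + ((2 * x 11) • pr 11)) x :=
      ((hasFDerivAt_sq 10 x).add (hasFDerivAt_sq 11 x)).sub_const 1
    rw [h.fderiv]
    fin_cases j <;>
      · simp (config := { decide := true }) [ContinuousLinearMap.sub_apply, ContinuousLinearMap.add_apply,
          ContinuousLinearMap.smul_apply, ContinuousLinearMap.proj_apply, Pi.single_apply]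
        try rfl
  · show fderiv ℝ (fun y : Fin 14 → ℝ => y 12 ^ 2 + y 13 ^ 2 - 1) x (Pi.single j 1) = _
    have h : HasFDerivAt (fun y : Fin 14 → ℝ => y 12 ^ 2 + y 13 ^ 2 - 1)
        (((2 * x 12) • pr 12) + ((2 * x 13) • pr 13)) x :=
      ((hasFDerivAt_sq 12 x).add (hasFDerivAt_sq 13 x)).sub_const 1
    rw [h.fderiv]
    fin_cases j <;>
      · simp (config := { decide := true }) [ContinuousLinearMap.sub_apply, ContinuousLinearMap.add_apply,
          ContinuousLinearMap.smul_apply, ContinuousLinearMap.proj_apply, Pi.single_apply]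
        try rfl

theorem rank_lt_of_left_kernel {m n : ℕ} (M : Matrix (Fin m) (Fin n) ℝ) (v : Fin m → ℝ)
    (hv : v ≠ 0) (h : M.vecMul v = 0) : M.rank < m := by
  rw [← Matrix.rank_transpose]
  have hker : v ∈ LinearMap.ker (Matrix.mulVecLin M.transpose) := by
    simp [Matrix.mulVecLin_apply, Matrix.mulVec_transpose, h]
  have h2 := LinearMap.finrank_range_add_finrank_ker (Matrix.mulVecLin M.transpose)
  have h3 : 0 < Module.finrank ℝ (LinearMap.ker (Matrix.mulVecLin M.transpose)) := by
    rw [Module.finrank_pos_iff]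
    exact ⟨⟨⟨v, hker⟩, 0, by simp [hv]⟩⟩
  have h4 : Module.finrank ℝ (Fin m → ℝ) = m := by simp
  unfold Matrix.rank
  omega

theorem two_eqs (P Q R B1 B2 : ℝ) (hR : R ≠ 0) (hPQ : P^2 + Q^2 = R) (hB : B1^2 + B2^2 = R) :
    (B1*P - B2*Q)/R * P + (B1*Q + B2*P)/R * Q = B1 ∧
    (B1*Q + B2*P)/R * P - (B1*P - B2*Q)/R * Q = B2 ∧
    ((B1*P - B2*Q)/R)^2 + ((B1*Q + B2*P)/R)^2 = 1 := by
  refine ⟨?_, ?_, ?_⟩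
  · field_simp
    linear_combination B1 * hPQ
  · field_simp
    linear_combination B2 * hPQ
  · field_simp
    linear_combination (B1^2 + B2^2) * hPQ + R * hB

set_option maxHeartbeats 4000000 in
theorem aux_singular (a1 a2 a3 a4 a5 a6 a7 b1 b2 w1 w2 n4 c7 s7 c2 s2 c4 s4 : ℝ)
    (h67 : a6 ≠ a7) (hn4pos : 0 < n4)
    (h77 : c7^2 + s7^2 = 1) (hu2 : c2^2 + s2^2 = 1) (hu4 : c4^2 + s4^2 = 1)
    (hA : a1^2 + a2^2 - 2*a1*a2*c2 = n4)
    (hB : a4^2 + a5^2 + 2*a4*a5*s4 = (a6-a7)^2)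
    (hb1 : b1 - w1 = (a3-a6+a7)*s7)
    (hb2 : b2 - w2 = -((a3-a6+a7)*c7))
    (hn4 : n4 = b1^2 + b2^2 + a3^2 + 2*a3*(b2*c7 - b1*s7)) :
    IsSingularAndrews a1 a2 a3 a4 a5 a6 a7 b1 b2 w1 w2
      (APt a1 a2 a3 a4 a5 a6 a7 b1 b2 n4 c7 s7 c2 s2 c4 s4) := by
  have hn4ne : n4 ≠ 0 := ne_of_gt hn4pos
  have hMne : ((a6-a7)^2 : ℝ) ≠ 0 := pow_ne_zero 2 (sub_ne_zero.mpr h67)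
  obtain ⟨hL11, hL12, hL13⟩ := two_eqs (a1 - a2*c2) (a2*s2) n4 (b1 - a3*s7) (b2 + a3*c7) hn4ne
    (by linear_combination hA + a2^2 * hu2) (by linear_combination a3^2 * h77 - hn4)
  obtain ⟨hL21, hL22, hL23⟩ := two_eqs (-(a4*s4) - a5) (-(a4*c4)) ((a6-a7)^2)
    ((a6-a7)*s7) ((a7-a6)*c7) hMne
    (by linear_combination hB + a4^2 * hu4) (by linear_combination (a6-a7)^2 * h77)
  constructor
  · funext i
    fin_cases i
    · show a1 * (((b1 - a3*s7) * (a1 - a2*c2) - (b2 + a3*c7) * (a2*s2)) / n4) - a2 * ((((b1 - a3*s7) * (a1 - a2*c2) - (b2 + a3*c7) * (a2*s2)) / n4) * c2 - (((b1 - a3*s7) * (a2*s2) + (b2 + a3*c7) * (a1 - a2*c2)) / n4) * s2) - a3 * -s7 - b1 = 0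
      linear_combination hL11
    · show a1 * (((b1 - a3*s7) * (a2*s2) + (b2 + a3*c7) * (a1 - a2*c2)) / n4) - a2 * ((((b1 - a3*s7) * (a2*s2) + (b2 + a3*c7) * (a1 - a2*c2)) / n4) * c2 + (((b1 - a3*s7) * (a1 - a2*c2) - (b2 + a3*c7) * (a2*s2)) / n4) * s2) + a3 * -c7 - b2 = 0
      linear_combination hL12
    · show a1 * (((b1 - a3*s7) * (a1 - a2*c2) - (b2 + a3*c7) * (a2*s2)) / n4) - a2 * ((((b1 - a3*s7) * (a1 - a2*c2) - (b2 + a3*c7) * (a2*s2)) / n4) * c2 - (((b1 - a3*s7) * (a2*s2) + (b2 + a3*c7) * (a1 - a2*c2)) / n4) * s2) - a4 * (s4 * (((a6-a7)*s7 * (-(a4*s4) - a5) - (a7-a6)*c7 * (-(a4*c4))) / (a6-a7)^2) + c4 * (((a6-a7)*s7 * (-(a4*c4)) + (a7-a6)*c7 * (-(a4*s4) - a5)) / (a6-a7)^2)) - a5 * (((a6-a7)*s7 * (-(a4*s4) - a5) - (a7-a6)*c7 * (-(a4*c4))) / (a6-a7)^2) - w1 = 0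
      linear_combination hL11 + hL21 + hb1
    · show a1 * (((b1 - a3*s7) * (a2*s2) + (b2 + a3*c7) * (a1 - a2*c2)) / n4) - a2 * ((((b1 - a3*s7) * (a2*s2) + (b2 + a3*c7) * (a1 - a2*c2)) / n4) * c2 + (((b1 - a3*s7) * (a1 - a2*c2) - (b2 + a3*c7) * (a2*s2)) / n4) * s2) + a4 * (c4 * (((a6-a7)*s7 * (-(a4*s4) - a5) - (a7-a6)*c7 * (-(a4*c4))) / (a6-a7)^2) - s4 * (((a6-a7)*s7 * (-(a4*c4)) + (a7-a6)*c7 * (-(a4*s4) - a5)) / (a6-a7)^2)) - a5 * (((a6-a7)*s7 * (-(a4*c4)) + (a7-a6)*c7 * (-(a4*s4) - a5)) / (a6-a7)^2) - w2 = 0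
      linear_combination hL12 + hL22 + hb2
    · show a1 * (((b1 - a3*s7) * (a1 - a2*c2) - (b2 + a3*c7) * (a2*s2)) / n4) - a2 * ((((b1 - a3*s7) * (a1 - a2*c2) - (b2 + a3*c7) * (a2*s2)) / n4) * c2 - (((b1 - a3*s7) * (a2*s2) + (b2 + a3*c7) * (a1 - a2*c2)) / n4) * s2) - a6 * (0 * c7 - 1 * s7) - a7 * s7 - w1 = 0
      linear_combination hL11 + hb1
    · show a1 * (((b1 - a3*s7) * (a2*s2) + (b2 + a3*c7) * (a1 - a2*c2)) / n4) - a2 * ((((b1 - a3*s7) * (a2*s2) + (b2 + a3*c7) * (a1 - a2*c2)) / n4) * c2 + (((b1 - a3*s7) * (a1 - a2*c2) - (b2 + a3*c7) * (a2*s2)) / n4) * s2) - a6 * (1 * c7 + 0 * s7) + a7 * c7 - w2 = 0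
      linear_combination hL12 + hb2
    · show (((b1 - a3*s7) * (a1 - a2*c2) - (b2 + a3*c7) * (a2*s2)) / n4) ^ 2 + (((b1 - a3*s7) * (a2*s2) + (b2 + a3*c7) * (a1 - a2*c2)) / n4) ^ 2 - 1 = 0
      linear_combination hL13
    · show c2 ^ 2 + s2 ^ 2 - 1 = 0
      linear_combination hu2
    · show (-c7) ^ 2 + (-s7) ^ 2 - 1 = 0
      linear_combination h77
    · show c4 ^ 2 + s4 ^ 2 - 1 = 0
      linear_combination hu4
    · show (((a6-a7)*s7 * (-(a4*s4) - a5) - (a7-a6)*c7 * (-(a4*c4))) / (a6-a7)^2) ^ 2 + (((a6-a7)*s7 * (-(a4*c4)) + (a7-a6)*c7 * (-(a4*s4) - a5)) / (a6-a7)^2) ^ 2 - 1 = 0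
      linear_combination hL23
    · show (0:ℝ) ^ 2 + (1:ℝ) ^ 2 - 1 = 0
      norm_num
    · show c7 ^ 2 + s7 ^ 2 - 1 = 0
      linear_combination h77
  · rw [jac_eq]
    set X := APt a1 a2 a3 a4 a5 a6 a7 b1 b2 n4 c7 s7 c2 s2 c4 s4 with hX
    refine rank_lt_of_left_kernel _
      (![s7, -c7, 0, 0, -s7, c7, 0, 0, -(a3/2), 0, 0, a6/2, (a6-a7)/2]) ?_ ?_
    · intro hz
      have h12 : (a6 - a7)/2 = 0 := congrFun hz 12
      have : a6 - a7 = 0 := by linarith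
      exact h67 (by linarith)
    · rw [Matrix.vecMul_transpose]
      funext j
      fin_cases j
      · show dotProduct
          ![a1 - a2 * X 2, -(a2 * X 3), a1 - a2 * X 2, -(a2 * X 3), a1 - a2 * X 2, -(a2 * X 3), 2 * X 0, 0, 0, 0, 0, 0, 0]
          ![s7, -c7, 0, 0, -s7, c7, 0, 0, -(a3/2), 0, 0, a6/2, (a6-a7)/2] = 0
        simp [dotProduct, Fin.sum_univ_succ]
        try ring
      · show dotProduct
          ![a2 * X 3, a1 - a2 * X 2, a2 * X 3, a1 - a2 * X 2, a2 * X 3, a1 - a2 * X 2, 2 * X 1, 0, 0, 0, 0, 0, 0]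
          ![s7, -c7, 0, 0, -s7, c7, 0, 0, -(a3/2), 0, 0, a6/2, (a6-a7)/2] = 0
        simp [dotProduct, Fin.sum_univ_succ]
        try ring
      · show dotProduct
          ![-(a2 * X 0), -(a2 * X 1), -(a2 * X 0), -(a2 * X 1), -(a2 * X 0), -(a2 * X 1), 0, 2 * X 2, 0, 0, 0, 0, 0]
          ![s7, -c7, 0, 0, -s7, c7, 0, 0, -(a3/2), 0, 0, a6/2, (a6-a7)/2] = 0
        simp [dotProduct, Fin.sum_univ_succ]
        try ring
      · show dotProduct
          ![a2 * X 1, -(a2 * X 0), a2 * X 1, -(a2 * X 0), a2 * X 1, -(a2 * X 0), 0, 2 * X 3, 0, 0, 0, 0, 0]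
          ![s7, -c7, 0, 0, -s7, c7, 0, 0, -(a3/2), 0, 0, a6/2, (a6-a7)/2] = 0
        simp [dotProduct, Fin.sum_univ_succ]
        try ring
      · show dotProduct
          ![0, a3, 0, 0, 0, 0, 0, 0, 2 * -c7, 0, 0, 0, 0]
          ![s7, -c7, 0, 0, -s7, c7, 0, 0, -(a3/2), 0, 0, a6/2, (a6-a7)/2] = 0
        simp [dotProduct, Fin.sum_univ_succ]
        try ring
      · show dotProduct
          ![-a3, 0, 0, 0, 0, 0, 0, 0, 2 * -s7, 0, 0, 0, 0]
          ![s7, -c7, 0, 0, -s7, c7, 0, 0, -(a3/2), 0, 0, a6/2, (a6-a7)/2] = 0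
        simp [dotProduct, Fin.sum_univ_succ]
        try ring
      · show dotProduct
          ![0, 0, -(a4 * X 9), a4 * X 8, 0, 0, 0, 0, 0, 2 * X 6, 0, 0, 0]
          ![s7, -c7, 0, 0, -s7, c7, 0, 0, -(a3/2), 0, 0, a6/2, (a6-a7)/2] = 0
        simp [dotProduct, Fin.sum_univ_succ]
      · show dotProduct
          ![0, 0, -(a4 * X 8), -(a4 * X 9), 0, 0, 0, 0, 0, 2 * X 7, 0, 0, 0]
          ![s7, -c7, 0, 0, -s7, c7, 0, 0, -(a3/2), 0, 0, a6/2, (a6-a7)/2] = 0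
        simp [dotProduct, Fin.sum_univ_succ]
      · show dotProduct
          ![0, 0, -(a4 * X 7) - a5, a4 * X 6, 0, 0, 0, 0, 0, 0, 2 * X 8, 0, 0]
          ![s7, -c7, 0, 0, -s7, c7, 0, 0, -(a3/2), 0, 0, a6/2, (a6-a7)/2] = 0
        simp [dotProduct, Fin.sum_univ_succ]
      · show dotProduct
          ![0, 0, -(a4 * X 6), -(a4 * X 7) - a5, 0, 0, 0, 0, 0, 0, 2 * X 9, 0, 0]
          ![s7, -c7, 0, 0, -s7, c7, 0, 0, -(a3/2), 0, 0, a6/2, (a6-a7)/2] = 0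
        simp [dotProduct, Fin.sum_univ_succ]
      · show dotProduct
          ![0, 0, 0, 0, -(a6 * c7), -(a6 * s7), 0, 0, 0, 0, 0, 2 * (0:ℝ), 0]
          ![s7, -c7, 0, 0, -s7, c7, 0, 0, -(a3/2), 0, 0, a6/2, (a6-a7)/2] = 0
        simp [dotProduct, Fin.sum_univ_succ]
        try ring
      · show dotProduct
          ![0, 0, 0, 0, a6 * s7, -(a6 * c7), 0, 0, 0, 0, 0, 2 * (1:ℝ), 0]
          ![s7, -c7, 0, 0, -s7, c7, 0, 0, -(a3/2), 0, 0, a6/2, (a6-a7)/2] = 0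
        simp [dotProduct, Fin.sum_univ_succ]
        linear_combination (-a6) * h77
      · show dotProduct
          ![0, 0, 0, 0, -(a6 * (0:ℝ)), -(a6 * (1:ℝ)) + a7, 0, 0, 0, 0, 0, 0, 2 * c7]
          ![s7, -c7, 0, 0, -s7, c7, 0, 0, -(a3/2), 0, 0, a6/2, (a6-a7)/2] = 0
        simp [dotProduct, Fin.sum_univ_succ]
        try ring
      · show dotProduct
          ![0, 0, 0, 0, a6 * (1:ℝ) - a7, -(a6 * (0:ℝ)), 0, 0, 0, 0, 0, 0, 2 * s7]
          ![s7, -c7, 0, 0, -s7, c7, 0, 0, -(a3/2), 0, 0, a6/2, (a6-a7)/2] = 0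
        simp [dotProduct, Fin.sum_univ_succ]
        try ring

set_option maxHeartbeats 1000000 in
/-- Theorem 2 of the paper (case `U1`): under the stated parameter conditions,
the Andrews system has at least 4 distinct singular configurations. -/
theorem exists_four_singular_points (a1 a2 a3 a4 a5 a6 a7 b1 b2 w1 w2 c7 s7 n4 n3 : ℝ)
    (h1 : a1 > 0) (h2 : a2 > 0) (h3 : a3 > 0) (h4 : a4 > 0)
    (h5 : a5 > 0) (h6 : a6 > 0) (h7 : a7 > 0)
    (h67 : a6 ≠ a7) (h12 : a1 ≠ a2) (hbw : (b1, b2) ≠ (w1, w2))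
    (hz1 : (a3 - a6 + a7) ^ 2 = (b1 - w1) ^ 2 + (b2 - w2) ^ 2)
    (hc7 : c7 = (b2 - w2) / (a6 - a3 - a7))
    (hs7 : s7 = (b1 - w1) / (a3 - a6 + a7))
    (hn4 : n4 = b1 ^ 2 + b2 ^ 2 + a3 ^ 2 + 2 * a3 * (b2 * c7 - b1 * s7))
    (hn3 : n3 = n4 - (a1 - a2) ^ 2)
    (ht : (a4 - a5 + a6 - a7) * (a4 - a5 - a6 + a7) *
          (a4 + a5 - a6 + a7) * (a4 + a5 + a6 - a7) < 0)
    (hn : n3 * (4 * a1 * a2 - n3) > 0) :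
    ∃ x1 x2 x3 x4 : Fin 14 → ℝ,
      x1 ≠ x2 ∧ x1 ≠ x3 ∧ x1 ≠ x4 ∧ x2 ≠ x3 ∧ x2 ≠ x4 ∧ x3 ≠ x4 ∧
      IsSingularAndrews a1 a2 a3 a4 a5 a6 a7 b1 b2 w1 w2 x1 ∧
      IsSingularAndrews a1 a2 a3 a4 a5 a6 a7 b1 b2 w1 w2 x2 ∧
      IsSingularAndrews a1 a2 a3 a4 a5 a6 a7 b1 b2 w1 w2 x3 ∧
      IsSingularAndrews a1 a2 a3 a4 a5 a6 a7 b1 b2 w1 w2 x4 := by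
  have hsum : (b1 - w1)^2 + (b2 - w2)^2 ≠ 0 := by
    intro h0
    apply hbw
    have hx : (b1 - w1)^2 = 0 := by linarith [sq_nonneg (b1 - w1), sq_nonneg (b2 - w2)]
    have hy : (b2 - w2)^2 = 0 := by linarith [sq_nonneg (b1 - w1), sq_nonneg (b2 - w2)]
    have e1 : b1 - w1 = 0 := by
      exact (pow_eq_zero_iff (by norm_num : (2:ℕ) ≠ 0)).mp hx
    have e2 : b2 - w2 = 0 := by
      exact (pow_eq_zero_iff (by norm_num : (2:ℕ) ≠ 0)).mp hy
    rw [show b1 = w1 from by linarith, show b2 = w2 from by linarith]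
  have hm1 : a3 - a6 + a7 ≠ 0 := by
    intro h0
    apply hsum
    rw [← hz1, h0]
    norm_num
  have hm1' : a6 - a3 - a7 ≠ 0 := fun h0 => hm1 (by linarith)
  have h77 : c7^2 + s7^2 = 1 := by
    rw [hc7, hs7]
    field_simp
    linear_combination (-(a3 - a6 + a7)^2) * hz1
  have hb1e : b1 - w1 = (a3 - a6 + a7) * s7 := by
    rw [hs7]; field_simp
  have hb2e : b2 - w2 = -((a3 - a6 + a7) * c7) := by
    rw [hc7]; field_simp; try ring
  have hp12 : 0 < a1 * a2 := mul_pos h1 h2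
  have hn3pos : 0 < n3 := by
    by_contra hcon
    push_neg at hcon
    have h4p : (0:ℝ) ≤ 4 * a1 * a2 - n3 := by linarith
    have hprod : 0 ≤ (-n3) * (4 * a1 * a2 - n3) := mul_nonneg (by linarith) h4p
    linarith [hn, hprod]
  have hn4pos : 0 < n4 := by linarith [sq_nonneg (a1 - a2), hn3pos, hn3]
  have ha12 : (2 * a1 * a2 : ℝ) ≠ 0 := by positivity
  have ha45 : (2 * a4 * a5 : ℝ) ≠ 0 := by positivity
  set c2 : ℝ := (a1^2 + a2^2 - n4) / (2 * a1 * a2) with hc2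
  have hA : a1^2 + a2^2 - 2 * a1 * a2 * c2 = n4 := by rw [hc2]; field_simp; try ring
  have key2 : (2 * a1 * a2)^2 * (1 - c2^2) = n3 * (4 * a1 * a2 - n3) := by
    rw [hc2, hn3]; field_simp; try ring
  have hsq12 : (0:ℝ) < (2 * a1 * a2)^2 := by positivity
  have hd2 : 0 < 1 - c2^2 := by
    by_contra hcon
    push_neg at hcon
    have hprod : 0 ≤ (2 * a1 * a2)^2 * (c2^2 - 1) := mul_nonneg hsq12.le (by linarith)
    linarith [key2, hn, hprod]
  set s2 : ℝ := Real.sqrt (1 - c2^2) with hs2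
  have hs2sq : s2^2 = 1 - c2^2 := Real.sq_sqrt hd2.le
  have hs2pos : 0 < s2 := Real.sqrt_pos.mpr hd2
  have hu2 : c2^2 + s2^2 = 1 := by rw [hs2sq]; ring
  have hu2' : c2^2 + (-s2)^2 = 1 := by rw [neg_sq]; exact hu2
  set s4 : ℝ := ((a6 - a7)^2 - a4^2 - a5^2) / (2 * a4 * a5) with hs4
  have hB : a4^2 + a5^2 + 2 * a4 * a5 * s4 = (a6 - a7)^2 := by
    rw [hs4]; field_simp; try ring
  have key4 : (2 * a4 * a5)^2 * (1 - s4^2)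
      = -((a4 - a5 + a6 - a7) * (a4 - a5 - a6 + a7) * (a4 + a5 - a6 + a7) * (a4 + a5 + a6 - a7)) := by
    rw [hs4]; field_simp; try ring
  have hsq45 : (0:ℝ) < (2 * a4 * a5)^2 := by positivity
  have hd4 : 0 < 1 - s4^2 := by
    by_contra hcon
    push_neg at hcon
    have hprod : 0 ≤ (2 * a4 * a5)^2 * (s4^2 - 1) := mul_nonneg hsq45.le (by linarith)
    linarith [key4, ht, hprod]
  set c4 : ℝ := Real.sqrt (1 - s4^2) with hc4d
  have hc4sq : c4^2 = 1 - s4^2 := Real.sq_sqrt hd4.le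
  have hc4pos : 0 < c4 := Real.sqrt_pos.mpr hd4
  have hu4 : c4^2 + s4^2 = 1 := by rw [hc4sq]; ring
  have hu4' : (-c4)^2 + s4^2 = 1 := by rw [neg_sq]; exact hu4
  refine ⟨APt a1 a2 a3 a4 a5 a6 a7 b1 b2 n4 c7 s7 c2 s2 c4 s4,
          APt a1 a2 a3 a4 a5 a6 a7 b1 b2 n4 c7 s7 c2 (-s2) c4 s4,
          APt a1 a2 a3 a4 a5 a6 a7 b1 b2 n4 c7 s7 c2 s2 (-c4) s4,
          APt a1 a2 a3 a4 a5 a6 a7 b1 b2 n4 c7 s7 c2 (-s2) (-c4) s4,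
          ?_, ?_, ?_, ?_, ?_, ?_,
          aux_singular a1 a2 a3 a4 a5 a6 a7 b1 b2 w1 w2 n4 c7 s7 c2 s2 c4 s4
            h67 hn4pos h77 hu2 hu4 hA hB hb1e hb2e hn4,
          aux_singular a1 a2 a3 a4 a5 a6 a7 b1 b2 w1 w2 n4 c7 s7 c2 (-s2) c4 s4
            h67 hn4pos h77 hu2' hu4 hA hB hb1e hb2e hn4,
          aux_singular a1 a2 a3 a4 a5 a6 a7 b1 b2 w1 w2 n4 c7 s7 c2 s2 (-c4) s4
            h67 hn4pos h77 hu2 hu4' hA hB hb1e hb2e hn4,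
          aux_singular a1 a2 a3 a4 a5 a6 a7 b1 b2 w1 w2 n4 c7 s7 c2 (-s2) (-c4) s4
            h67 hn4pos h77 hu2' hu4' hA hB hb1e hb2e hn4⟩
  · intro h
    have h3 : s2 = -s2 := congrFun h 3
    linarith
  · intro h
    have h6 : c4 = -c4 := congrFun h 6
    linarith
  · intro h
    have h3 : s2 = -s2 := congrFun h 3
    linarith
  · intro h
    have h3 : -s2 = s2 := congrFun h 3
    linarith
  · intro h
    have h6 : c4 = -c4 := congrFun h 6
    linarith
  · intro h
    have h3 : s2 = -s2 := congrFun h 3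
    linarith
end
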